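/- Let s ∈ ℂ with Re(s) > 1 and β ∈ ℂ with Re(β) > 0. Then there exists a constant C > 0 such that for every integer k ≥ 1 and every real r with |r| ≤ 1: |H(r, g_{s+2k,β})| ≤ C · k^{−Re(β)/2}, where g_{s,β}(u) := 2^{1/2}√π (Γ(s−1/2)/Γ(s)) cosh(u)^{−(s−1/2)} tanh(u)^{β} and H(r,g) := 2∫₀^∞ cos(ur) g(u) du. -/

import Mathlib

/-!
Writing `y = tanh² u`, so that `1 - y = cosh⁻² u`, the factor `tanh^β u · cosh^{-2k} u` of
`g_{s+2k,β}(u)` has modulus `y^p (1 - y)^k ≤ (p/e)^p k^{-p}` with `p = Re β / 2`, uniformly in `u`.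
The remaining factor `cosh^{-(Re s - 1/2)} u ≤ 2^{Re s - 1/2} e^{-(Re s - 1/2) u}` is integrable
on `(0, ∞)` and independent of `k`, and the Gamma quotient `Γ(z - 1/2)/Γ(z) = B(z - 1/2, 1/2)/Γ(1/2)`
stays bounded since `|B(z - 1/2, 1/2)| ≤ ∫₀¹ (1 - t)^{-1/2} dt = 2` once `Re z ≥ 3/2`.
-/

open MeasureTheory

/-- `H(r,g) := 2 ∫₀^∞ cos(ur) g(u) du`. -/
noncomputable def waveH (r : ℂ) (g : ℝ → ℂ) : ℂ :=
  2 * ∫ u in Set.Ioi (0 : ℝ), Complex.cos (u * r) * g u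

/-- The test function `g_{s,β}(u) = 2^{1/2}√π (Γ(s-1/2)/Γ(s)) cosh(u)^{-(s-1/2)} tanh(u)^β`. -/
noncomputable def gTestBeta (s β : ℂ) (u : ℝ) : ℂ :=
  (2 : ℂ) ^ ((1 / 2 : ℂ)) * (Real.sqrt Real.pi : ℂ) *
    (Complex.Gamma (s - 1 / 2) / Complex.Gamma s) *
      ((Real.cosh u : ℂ) ^ (-(s - 1 / 2))) * ((Real.tanh u : ℂ) ^ β)

open Real

theorem rpow_mul_exp_neg_le {p z : ℝ} (hp : 0 < p) (hz : 0 ≤ z) :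
    z ^ p * exp (-z) ≤ (p / exp 1) ^ p := by
  have h : z * exp (-(z / p)) ≤ p / exp 1 := by
    have := add_one_le_exp (z / p - 1)
    rw [sub_add_cancel, exp_sub, div_le_div_iff₀ hp (exp_pos 1)] at this
    rw [exp_neg, le_div_iff₀ (exp_pos 1), ← div_eq_mul_inv, div_mul_eq_mul_div,
      div_le_iff₀ (exp_pos _)]
    linarith
  calc z ^ p * exp (-z) = (z * exp (-(z / p))) ^ p := by
        rw [mul_rpow hz (exp_pos _).le, ← exp_mul]
        field_simp
    _ ≤ (p / exp 1) ^ p := rpow_le_rpow (by positivity) h hp.le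

theorem rpow_mul_one_sub_rpow_le {p k y : ℝ} (hp : 0 < p) (hk : 0 < k) (hy₀ : 0 ≤ y)
    (hy₁ : y ≤ 1) : y ^ p * (1 - y) ^ k ≤ (p / exp 1) ^ p * k ^ (-p) := by
  have hpow : (1 - y) ^ k ≤ exp (-(k * y)) :=
    calc (1 - y) ^ k ≤ exp (-y) ^ k :=
          rpow_le_rpow (by linarith) (by linarith [add_one_le_exp (-y)]) hk.le
      _ = exp (-(k * y)) := by rw [← exp_mul]; ring_nf
  calc y ^ p * (1 - y) ^ k ≤ y ^ p * exp (-(k * y)) := by gcongr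
    _ = k ^ (-p) * ((k * y) ^ p * exp (-(k * y))) := by
        rw [mul_rpow hk.le hy₀, rpow_neg hk.le]
        field_simp
    _ ≤ k ^ (-p) * (p / exp 1) ^ p := by
        gcongr
        exact rpow_mul_exp_neg_le hp (by positivity)
    _ = (p / exp 1) ^ p * k ^ (-p) := mul_comm _ _

theorem Real.tanh_pos_of_pos {x : ℝ} (hx : 0 < x) : 0 < tanh x := by
  rw [tanh_eq_sinh_div_cosh]
  exact div_pos (sinh_pos_iff.mpr hx) (cosh_pos x)

theorem Real.one_sub_tanh_sq (x : ℝ) : 1 - tanh x ^ 2 = (cosh x ^ 2)⁻¹ := by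
  have := cosh_sq_sub_sinh_sq x
  have := cosh_pos x
  rw [tanh_eq_sinh_div_cosh]
  field_simp
  linarith

theorem tanh_rpow_mul_cosh_rpow_le {p k x : ℝ} (hp : 0 < p) (hk : 0 < k) (hx : 0 < x) :
    tanh x ^ (2 * p) * cosh x ^ (-(2 * k)) ≤ (p / exp 1) ^ p * k ^ (-p) := by
  have hc := cosh_pos x
  convert rpow_mul_one_sub_rpow_le hp hk (sq_nonneg (tanh x)) (tanh_sq_lt_one x).le using 2
  · rw [← rpow_natCast, ← rpow_mul (tanh_pos_of_pos hx).le]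
    norm_num
  · rw [one_sub_tanh_sq, ← rpow_natCast, ← rpow_neg_one, ← rpow_mul hc.le, ← rpow_mul hc.le]
    norm_num

theorem cosh_rpow_neg_le {a : ℝ} (ha : 0 ≤ a) (x : ℝ) : cosh x ^ (-a) ≤ 2 ^ a * exp (-a * x) :=
  calc cosh x ^ (-a) ≤ (exp x / 2) ^ (-a) := by
        refine rpow_le_rpow_of_nonpos (by positivity) ?_ (by linarith)
        rw [cosh_eq]
        linarith [exp_pos (-x)]
    _ = 2 ^ a * exp (-a * x) := by
        rw [div_rpow (exp_pos x).le zero_le_two, ← exp_mul, rpow_neg zero_le_two]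
        ring_nf
        field_simp

theorem Complex.norm_betaIntegral_le {u v : ℂ} (hu : 1 ≤ u.re) (hv : 0 < v.re) :
    ‖betaIntegral u v‖ ≤ 1 / v.re := by
  have hbound : ∀ t ∈ Set.Ioo (0 : ℝ) 1,
      ‖(t : ℂ) ^ (u - 1) * (1 - (t : ℂ)) ^ (v - 1)‖ ≤ (1 - t) ^ (v.re - 1) := by
    rintro t ⟨ht₀, ht₁⟩
    have h1t : (1 - (t : ℂ)) = ((1 - t : ℝ) : ℂ) := by push_cast; ring
    rw [norm_mul, h1t, norm_cpow_eq_rpow_re_of_pos ht₀, norm_cpow_eq_rpow_re_of_pos (by linarith)]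
    have : t ^ (u - 1).re ≤ 1 := rpow_le_one ht₀.le ht₁.le (by simp only [sub_re, one_re, sub_nonneg]; exact hu)
    simp only [sub_re, one_re] at this ⊢
    exact mul_le_of_le_one_left (by positivity) this
  have hint : ∫ t in (0 : ℝ)..1, (1 - t) ^ (v.re - 1) = 1 / v.re := by
    rw [intervalIntegral.integral_comp_sub_left (fun x : ℝ => x ^ (v.re - 1)) 1,
      integral_rpow (Or.inl (by linarith))]
    simp [hv.ne']
  calc ‖betaIntegral u v‖ ≤ ∫ t in (0 : ℝ)..1, (1 - t) ^ (v.re - 1) :=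
        intervalIntegral.norm_integral_le_of_norm_le zero_le_one ?_ ?_
    _ = 1 / v.re := hint
  · filter_upwards [(Set.countable_singleton (1 : ℝ)).ae_notMem volume] with t ht₁ ht
    exact hbound t ⟨ht.1, lt_of_le_of_ne ht.2 ht₁⟩
  · simpa using ((intervalIntegral.intervalIntegrable_rpow' (a := 0) (b := 1)
      (by linarith : -1 < v.re - 1)).comp_sub_left 1).symm

theorem Complex.norm_Gamma_sub_div_Gamma_le {z w : ℂ} (hw : 0 < w.re) (hzw : 1 ≤ (z - w).re) :
    ‖Gamma (z - w) / Gamma z‖ ≤ (w.re * ‖Gamma w‖)⁻¹ := by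
  have hΓz : Gamma z ≠ 0 := Gamma_ne_zero_of_re_pos (by rw [sub_re] at hzw; linarith)
  have hΓw : Gamma w ≠ 0 := Gamma_ne_zero_of_re_pos hw
  have hB := Gamma_mul_Gamma_eq_betaIntegral (by linarith : 0 < (z - w).re) hw
  rw [sub_add_cancel] at hB
  have hratio : Gamma (z - w) / Gamma z = betaIntegral (z - w) w / Gamma w := by
    rw [div_eq_div_iff hΓz hΓw, hB, mul_comm]
  rw [hratio, norm_div, mul_inv, ← div_eq_mul_inv, ← one_div]
  gcongr
  exact norm_betaIntegral_le hzw hw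

theorem norm_waveH_le {g : ℝ → ℂ} {M a : ℝ} (ha : 0 < a)
    (hg : ∀ u > 0, ‖g u‖ ≤ M * exp (-a * u)) (r : ℝ) : ‖waveH r g‖ ≤ 2 * M / a := by
  have hcos (u : ℝ) : ‖Complex.cos (u * r)‖ ≤ 1 := by
    rw [← Complex.ofReal_mul, ← Complex.ofReal_cos, Complex.norm_real, norm_eq_abs]
    exact abs_cos_le_one _
  have hint : ∫ u in Set.Ioi (0 : ℝ), M * exp (-a * u) = M / a := by
    rw [integral_const_mul, integral_exp_mul_Ioi (neg_neg_of_pos ha)]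
    field_simp
    simp
  have hbound : ‖∫ u in Set.Ioi (0 : ℝ), Complex.cos (u * r) * g u‖ ≤ M / a := by
    rw [← hint]
    refine norm_integral_le_of_norm_le ((exp_neg_integrableOn_Ioi 0 ha).const_mul M) ?_
    filter_upwards [self_mem_ae_restrict measurableSet_Ioi] with u hu
    rw [norm_mul]
    exact (mul_le_of_le_one_left (norm_nonneg _) (hcos u)).trans (hg u hu)
  rw [waveH, norm_mul, Complex.norm_two, mul_div_assoc]
  gcongr

theorem norm_gTestBeta {z β : ℂ} {u : ℝ} (hu : 0 < u) :
    ‖gTestBeta z β u‖ = 2 ^ (1 / 2 : ℝ) * √π * ‖Complex.Gamma (z - 1 / 2) / Complex.Gamma z‖ *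
      cosh u ^ (-(z.re - 1 / 2)) * tanh u ^ β.re := by
  rw [gTestBeta, norm_mul, norm_mul, norm_mul, norm_mul,
    Complex.norm_cpow_eq_rpow_re_of_pos (cosh_pos u),
    Complex.norm_cpow_eq_rpow_re_of_pos (tanh_pos_of_pos hu),
    Complex.norm_real, norm_of_nonneg (sqrt_nonneg π),
    show (2 : ℂ) = ((2 : ℝ) : ℂ) by norm_num, Complex.norm_cpow_eq_rpow_re_of_pos two_pos]
  norm_num

theorem norm_gTestBeta_add_two_mul_le {s β : ℂ} (hs : 1 / 2 ≤ s.re) (hβ : 0 < β.re) :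
    ∃ K > 0, ∀ k : ℝ, 1 ≤ k → ∀ u > 0,
      ‖gTestBeta (s + 2 * k) β u‖ ≤ K * k ^ (-(β.re / 2)) * exp (-(s.re - 1 / 2) * u) := by
  set p := β.re / 2
  set a := s.re - 1 / 2 with ha
  have hΓ : 0 < ‖Complex.Gamma (1 / 2)‖ :=
    norm_pos_iff.mpr (Complex.Gamma_ne_zero_of_re_pos (by norm_num))
  refine ⟨2 ^ (1 / 2 : ℝ) * √π * (1 / 2 * ‖Complex.Gamma (1 / 2)‖)⁻¹ * (p / exp 1) ^ p * 2 ^ a,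
    by positivity, fun k hk u hu => ?_⟩
  have hre : (s + 2 * k : ℂ).re = s.re + 2 * k := by simp
  have hre : (s + 2 * k : ℂ).re = s.re + 2 * k := by simp
  have hratio : ‖Complex.Gamma (s + 2 * k - 1 / 2) / Complex.Gamma (s + 2 * k)‖ ≤
      (1 / 2 * ‖Complex.Gamma (1 / 2)‖)⁻¹ := by
    convert Complex.norm_Gamma_sub_div_Gamma_le (z := s + 2 * k) (w := 1 / 2) (by norm_num)
      (by rw [Complex.sub_re, hre]; norm_num; linarith) using 3
    norm_num
  have hsplit : cosh u ^ (-((s + 2 * k : ℂ).re - 1 / 2)) =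
      cosh u ^ (-a) * cosh u ^ (-(2 * k)) := by
    rw [← rpow_add (cosh_pos u), hre, ha]
    ring_nf
  have htc := tanh_rpow_mul_cosh_rpow_le (by positivity : 0 < p) (by linarith : (0 : ℝ) < k) hu
  rw [show 2 * p = β.re by ring] at htc
  have hc := cosh_rpow_neg_le (by linarith : 0 ≤ a) u
  have htanh := tanh_pos_of_pos hu
  rw [norm_gTestBeta hu, hsplit]
  calc 2 ^ (1 / 2 : ℝ) * √π * ‖Complex.Gamma (s + 2 * k - 1 / 2) / Complex.Gamma (s + 2 * k)‖ *
        (cosh u ^ (-a) * cosh u ^ (-(2 * k))) * tanh u ^ β.re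
      = 2 ^ (1 / 2 : ℝ) * √π * ‖Complex.Gamma (s + 2 * k - 1 / 2) / Complex.Gamma (s + 2 * k)‖ *
        (tanh u ^ β.re * cosh u ^ (-(2 * k))) * cosh u ^ (-a) := by ring
    _ ≤ 2 ^ (1 / 2 : ℝ) * √π * (1 / 2 * ‖Complex.Gamma (1 / 2)‖)⁻¹ *
        ((p / exp 1) ^ p * k ^ (-p)) * (2 ^ a * exp (-a * u)) := by
      gcongr
    _ = _ := by ring

theorem statement12 (s β : ℂ) (hs : 1 < s.re) (hβ : 0 < β.re) :
    ∃ C : ℝ, 0 < C ∧ ∀ k : ℕ, 1 ≤ k → ∀ r : ℝ, |r| ≤ 1 →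
      ‖waveH r (gTestBeta (s + 2 * k) β)‖ ≤ C * (k : ℝ) ^ (-(β.re / 2)) := by
  obtain ⟨K, hK, hg⟩ := norm_gTestBeta_add_two_mul_le (by linarith : 1 / 2 ≤ s.re) hβ
  have ha : 0 < s.re - 1 / 2 := by linarith
  refine ⟨2 * K / (s.re - 1 / 2), by positivity, fun k hk r _ => ?_⟩
  have hk' : (1 : ℝ) ≤ k := by exact_mod_cast hk
  calc ‖waveH r (gTestBeta (s + 2 * k) β)‖ ≤ 2 * (K * (k : ℝ) ^ (-(β.re / 2))) / (s.re - 1 / 2) :=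
        norm_waveH_le ha (fun u hu => by simpa using hg k hk' u hu) r
    _ = 2 * K / (s.re - 1 / 2) * (k : ℝ) ^ (-(β.re / 2)) := by ring
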